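/- arXiv:2408.17093 — 11 statements merged into one kernel-verified Lean document; each statement's English description precedes it below -/
import Mathlib

section
/- For all p ∈ [4/3, 2], s ∈ [2, 4], and r ∈ [0, 1], the inequality p(1−r)(r^s−1)(r^s−r) + 2sr(r^{s−1}−r^{s+1}) + 2r(r^{2s}−1) ≤ 0 holds. -/
/-!
Write `x = r ^ s`, so that `x ≤ r ≤ 1`. The left-hand side equals
`(p - 2) (1 - r) (1 - x) (r - x) + 2 ((s - 1) x (1 - r²) - (r² - x²))`.
The first term is nonpositive for `p ≤ 2`. Under `r = e^{-t}` the second is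
`4 e^{-(s+1) t} ((s - 1) sinh t - sinh ((s - 1) t))`, which is nonpositive for `s ≥ 2`
because `sinh` is convex on `[0, ∞)` and vanishes at `0`.
-/

open Real Set

lemma Real.convexOn_sinh : ConvexOn ℝ (Ici 0) sinh := by
  refine MonotoneOn.convexOn_of_deriv (convex_Ici 0) continuous_sinh.continuousOn
    differentiable_sinh.differentiableOn ?_
  rw [interior_Ici, deriv_sinh]
  exact cosh_strictMonoOn.monotoneOn.mono Ioi_subset_Ici_self

lemma Real.mul_sinh_le_sinh_mul {a t : ℝ} (ha : 1 ≤ a) (ht : 0 ≤ t) :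
    a * sinh t ≤ sinh (a * t) := by
  have ha0 : 0 < a := by linarith
  have h := convexOn_sinh.2 (mem_Ici.2 le_rfl) (mem_Ici.2 (by positivity : 0 ≤ a * t))
    (sub_nonneg.2 (inv_le_one_of_one_le₀ ha)) (inv_nonneg.2 ha0.le) (sub_add_cancel 1 a⁻¹)
  simp only [smul_eq_mul, mul_zero, sinh_zero, zero_add, inv_mul_cancel_left₀ ha0.ne'] at h
  calc a * sinh t ≤ a * (a⁻¹ * sinh (a * t)) := by gcongr
    _ = sinh (a * t) := mul_inv_cancel_left₀ ha0.ne' _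

lemma Real.sub_one_mul_rpow_mul_one_sub_sq_le {r s : ℝ} (hs : 2 ≤ s) (hr0 : 0 ≤ r)
    (hr1 : r ≤ 1) : (s - 1) * r ^ s * (1 - r ^ 2) ≤ r ^ 2 - r ^ (2 * s) := by
  rcases hr0.eq_or_lt with rfl | hr0
  · simp [zero_rpow (by linarith : s ≠ 0), zero_rpow (by linarith : 2 * s ≠ 0)]
  obtain ⟨t, ht, rfl⟩ : ∃ t, 0 ≤ t ∧ exp (-t) = r :=
    ⟨-log r, neg_nonneg.2 (log_nonpos hr0.le hr1), by rw [neg_neg, exp_log hr0]⟩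
  have key := mul_le_mul_of_nonneg_left (mul_sinh_le_sinh_mul (a := s - 1) (by linarith) ht)
    (by positivity : 0 ≤ 2 * exp (-(s + 1) * t))
  rw [sinh_eq, sinh_eq] at key
  rw [← exp_mul, ← exp_mul, ← exp_nat_mul]
  refine (Eq.trans_le ?_ key).trans_eq ?_ <;> ring_nf <;> simp only [mul_assoc, ← exp_add] <;>
    ring_nf

theorem stmt_0 (p s r : ℝ) (hp : p ∈ Set.Icc (4/3 : ℝ) 2)
    (hs : s ∈ Set.Icc (2 : ℝ) 4) (hr : r ∈ Set.Icc (0 : ℝ) 1) :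
    p * (1 - r) * (r ^ s - 1) * (r ^ s - r)
      + 2 * s * r * (r ^ (s - 1) - r ^ (s + 1))
      + 2 * r * (r ^ (2 * s) - 1) ≤ 0 := by
  obtain ⟨-, hp⟩ := hp
  obtain ⟨hs, -⟩ := hs
  obtain ⟨hr0, hr1⟩ := hr
  have hpred : r ^ (s - 1) * r = r ^ s := by
    rw [← rpow_add_one' hr0 (by linarith : (0 : ℝ) < s - 1 + 1).ne', sub_add_cancel]
  have hsucc : r ^ (s + 1) = r ^ s * r := rpow_add_one' hr0 (by linarith : (0 : ℝ) < s + 1).ne'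
  have hdouble : r ^ (2 * s) = (r ^ s) ^ 2 := by rw [mul_comm, rpow_mul hr0, rpow_two]
  have hcubic : 0 ≤ (2 - p) * ((1 - r) * (1 - r ^ s) * (r - r ^ s)) := by
    have := rpow_nonneg hr0 s
    have := rpow_le_self_of_le_one hr0 hr1 (by linarith : 1 ≤ s)
    apply_rules [mul_nonneg] <;> linarith
  have hsinh := sub_one_mul_rpow_mul_one_sub_sq_le hs hr0 hr1
  linear_combination hcubic + 2 * hsinh + 2 * s * hpred - 2 * s * r * hsucc + (2 * r - 2) * hdouble
end

section
/- For all s ∈ [2, 4] and r ∈ [0, 1], the function ψ(r) = −2r^s + s r² − s + 2 satisfies ψ(r) ≤ 0. -/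
theorem stmt_2 (s r : ℝ) (hs : s ∈ Set.Icc (2 : ℝ) 4) (hr : r ∈ Set.Icc (0 : ℝ) 1) :
    -2 * r ^ s + s * r ^ (2 : ℕ) - s + 2 ≤ 0 := by
  obtain ⟨hs2, hs4⟩ := hs
  obtain ⟨hr0, hr1⟩ := hr
  have hb := one_add_mul_self_le_rpow_one_add
    (show (-1:ℝ) ≤ r ^ (2:ℕ) - 1 by nlinarith) (show (1:ℝ) ≤ s / 2 by linarith)
  have hrs : r ^ s = (r ^ (2:ℕ)) ^ (s / 2) := by
    rw [← Real.rpow_natCast r 2, ← Real.rpow_mul hr0]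
    norm_num
    rw [show 2 * (s / 2) = s by ring]
  rw [hrs]
  have h1 : 1 + (r ^ (2:ℕ) - 1) = r ^ (2:ℕ) := by ring
  rw [h1] at hb
  nlinarith [hb]
end

section
/- For all s ∈ [2, 4] and r ∈ [0, 1], the quantity (1 − r^{2s−2}) + (1−s)(r^{s−2} − r^s) is nonnegative for r ∈ (0,1]. -/
/-!
With `g(x) = (1 - x^(2s-2)) + (1-s)(x^(s-2) - x^s)` one has `g(1) = 0` and
`g'(x) = (1-s) x^(s-3) (2x^s + (s-2) - s x^2)`. The last factor is nonnegative by Bernoulli's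
inequality `(x^2)^(s/2) ≥ 1 + (s/2)(x^2 - 1)`, so for `s ≥ 2` the function `g` is antitone on
`(0, ∞)` and hence `g(r) ≥ g(1) = 0` for `r ∈ (0, 1]`.
-/

open Real Set

lemma mul_sq_le_two_mul_rpow_add {s x : ℝ} (hs : 2 ≤ s) (hx : 0 ≤ x) :
    s * x ^ 2 ≤ 2 * x ^ s + (s - 2) := by
  have bernoulli := one_add_mul_self_le_rpow_one_add (s := x ^ 2 - 1)
    (by nlinarith [sq_nonneg x]) (p := s / 2) (by linarith)
  have hpow : (x ^ 2) ^ (s / 2) = x ^ s := by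
    rw [← rpow_natCast, ← rpow_mul hx]; ring_nf
  rw [add_sub_cancel, hpow] at bernoulli
  linarith

lemma hasDerivAt_one_sub_rpow_add_mul_rpow_sub_rpow {s x : ℝ} (hx : 0 < x) :
    HasDerivAt (fun y : ℝ => (1 - y ^ (2 * s - 2)) + (1 - s) * (y ^ (s - 2) - y ^ s))
      ((1 - s) * x ^ (s - 3) * (2 * x ^ s + (s - 2) - s * x ^ 2)) x := by
  have hpow (t : ℝ) : HasDerivAt (fun y : ℝ => y ^ t) (t * x ^ (t - 1)) x :=
    hasDerivAt_rpow_const (Or.inl hx.ne')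
  refine (((hpow (2 * s - 2)).const_sub 1).add
    (((hpow (s - 2)).sub (hpow s)).const_mul (1 - s))).congr_deriv ?_
  have h2s : x ^ (2 * s - 2 - 1) = x ^ (s - 3) * x ^ s := by
    rw [← rpow_add hx]; ring_nf
  have hs1 : x ^ (s - 1) = x ^ (s - 3) * x ^ 2 := by
    rw [← rpow_natCast, ← rpow_add hx]; ring_nf
  rw [h2s, hs1, show s - 2 - 1 = s - 3 by ring]
  ring

lemma antitoneOn_one_sub_rpow_add_mul_rpow_sub_rpow {s : ℝ} (hs : 2 ≤ s) :
    AntitoneOn (fun y : ℝ => (1 - y ^ (2 * s - 2)) + (1 - s) * (y ^ (s - 2) - y ^ s)) (Ioi 0) := by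
  refine antitoneOn_of_hasDerivWithinAt_nonpos (convex_Ioi 0)
    (fun x hx => (hasDerivAt_one_sub_rpow_add_mul_rpow_sub_rpow hx).continuousAt.continuousWithinAt)
    (fun x hx => (hasDerivAt_one_sub_rpow_add_mul_rpow_sub_rpow
      (interior_subset (s := Ioi 0) hx)).hasDerivWithinAt) ?_
  intro x hx
  rw [interior_Ioi] at hx
  have hbracket := mul_sq_le_two_mul_rpow_add hs (le_of_lt hx)
  exact mul_nonpos_of_nonpos_of_nonneg
    (mul_nonpos_of_nonpos_of_nonneg (by linarith) (rpow_nonneg (le_of_lt hx) _)) (by linarith)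

theorem stmt_3 (s r : ℝ) (hs : s ∈ Set.Icc (2 : ℝ) 4) (hr : r ∈ Set.Ioc (0 : ℝ) 1) :
    0 ≤ (1 - r ^ (2 * s - 2)) + (1 - s) * (r ^ (s - 2) - r ^ s) := by
  have h := antitoneOn_one_sub_rpow_add_mul_rpow_sub_rpow hs.1 hr.1 (mem_Ioi.2 one_pos) hr.2
  simpa using h
end

section
/- For all s ∈ [4/3, 2], the inequality φ₁(s) = −(s−1)·log(2^s − 1) + (s−2)·log(2^s + 1) − s·log(2 sin(π/(2s))) + log 6 ≤ 0 holds. -/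
/-!
The function `phi1` is convex on `[4/3, 2]`, vanishes at `2`, and is negative at `4/3` (there
the inequality reduces to `6³ ≤ (2∛2 - 1)(2∛2 + 1)²(2 + √2)²`), so it is nonpositive on the
whole interval.

Convexity is certified by interval arithmetic. With `x = 2^s`, the second derivative is
  `π²/(4 s³ sin²(π/(2s))) - 4 log 2 · x/(x² - 1)`
    `+ log² 2 · ((s - 1) x/(x - 1)² + (s - 2) x/(x + 1)²)`,
and each of its terms is built from factors monotone in `s` or in `x`. On a cell `[a, b]` each term
is therefore bounded below by endpoint values, evaluated with Taylor enclosures of `exp` and `sin`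
and decimal bounds for `log 2` and `π`. The resulting rational lower bound is checked to be
nonnegative on the 192 cells of width `1/288`.
-/

open Real Set

section Derivatives

variable {b k c s : ℝ}

theorem hasDerivAt_sub_mul_log_rpow_add (hb : 0 < b) (hc : b ^ s + c ≠ 0) :
    HasDerivAt (fun t => (t - k) * log (b ^ t + c))
      (log (b ^ s + c) + (s - k) * (b ^ s * log b / (b ^ s + c))) s := by
  have hexp := (hasStrictDerivAt_const_rpow hb s).hasDerivAt
  refine (((hasDerivAt_id s).sub_const k).mul ((hexp.add_const c).log hc)).congr_deriv ?_
  simp only [id_eq]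
  ring

theorem hasDerivAt_sub_mul_log_rpow_add_deriv (hb : 0 < b) (hc : b ^ s + c ≠ 0) :
    HasDerivAt (fun t => log (b ^ t + c) + (t - k) * (b ^ t * log b / (b ^ t + c)))
      (2 * (b ^ s * log b / (b ^ s + c)) + (s - k) * (c * b ^ s * log b ^ 2 / (b ^ s + c) ^ 2))
      s := by
  have hexp := (hasStrictDerivAt_const_rpow hb s).hasDerivAt
  refine (((hexp.add_const c).log hc).add (((hasDerivAt_id s).sub_const k).mul
    ((hexp.mul_const (log b)).div (hexp.add_const c) hc))).congr_deriv ?_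
  simp only [id_eq, Pi.div_apply]
  field_simp
  ring

variable {ψ ψ' : ℝ → ℝ} {ψ'' : ℝ}

theorem hasDerivAt_const_div (hs : s ≠ 0) : HasDerivAt (fun t => c / t) (-(c / s ^ 2)) s := by
  refine ((hasDerivAt_inv hs).const_mul c).congr_deriv (by ring) |>.congr_of_eventuallyEq ?_
  exact Filter.Eventually.of_forall fun t => by simp [div_eq_mul_inv]

theorem hasDerivAt_mul_comp_div (hs : s ≠ 0) (hψ : HasDerivAt ψ (ψ' (c / s)) (c / s)) :
    HasDerivAt (fun t => t * ψ (c / t)) (ψ (c / s) - c / s * ψ' (c / s)) s := by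
  refine ((hasDerivAt_id s).mul (hψ.comp s (hasDerivAt_const_div hs))).congr_deriv ?_
  simp only [id_eq, Function.comp_apply]
  field_simp
  ring

theorem hasDerivAt_mul_comp_div_deriv (hs : s ≠ 0) (hψ : HasDerivAt ψ (ψ' (c / s)) (c / s))
    (hψ' : HasDerivAt ψ' ψ'' (c / s)) :
    HasDerivAt (fun t => ψ (c / t) - c / t * ψ' (c / t)) (c ^ 2 * ψ'' / s ^ 3) s := by
  have hinv := hasDerivAt_const_div (c := c) hs
  refine ((hψ.comp s hinv).sub (hinv.mul (hψ'.comp s hinv))).congr_deriv ?_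
  simp only [Function.comp_apply]
  field_simp
  ring

end Derivatives

theorem hasDerivAt_log_two_mul_sin {u : ℝ} (hu : sin u ≠ 0) :
    HasDerivAt (fun v => log (2 * sin v)) (cos u / sin u) u := by
  refine (((hasDerivAt_sin u).const_mul 2).log (by positivity)).congr_deriv ?_
  field_simp

theorem hasDerivAt_cos_div_sin {u : ℝ} (hu : sin u ≠ 0) :
    HasDerivAt (fun v => cos v / sin v) (-1 / sin u ^ 2) u := by
  refine ((hasDerivAt_cos u).div (hasDerivAt_sin u) hu).congr_deriv ?_
  rw [← sin_sq_add_cos_sq u]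
  ring

theorem sin_pi_div_two_mul_pos {s : ℝ} (hs : 1 / 2 < s) : 0 < sin (π / (2 * s)) := by
  apply sin_pos_of_pos_of_lt_pi (by positivity)
  rw [div_lt_iff₀ (by positivity)]
  nlinarith [pi_pos]

theorem antitoneOn_div_sq_sub_one : AntitoneOn (fun x : ℝ => x / (x ^ 2 - 1)) (Ioi 1) := by
  intro x hx y hy hxy
  simp only [mem_Ioi] at hx hy
  rw [div_le_div_iff₀ (by nlinarith) (by nlinarith)]
  nlinarith [mul_nonneg (sub_nonneg.2 hxy) (by nlinarith : (0 : ℝ) ≤ x * y + 1)]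

theorem antitoneOn_div_sub_one_sq : AntitoneOn (fun x : ℝ => x / (x - 1) ^ 2) (Ioi 1) := by
  intro x hx y hy hxy
  simp only [mem_Ioi] at hx hy
  rw [div_le_div_iff₀ (by nlinarith) (by nlinarith)]
  nlinarith [mul_nonneg (sub_nonneg.2 hxy) (by nlinarith : (0 : ℝ) ≤ x * y - 1)]

theorem antitoneOn_div_add_one_sq : AntitoneOn (fun x : ℝ => x / (x + 1) ^ 2) (Ici 1) := by
  intro x hx y hy hxy
  simp only [mem_Ici] at hx hy
  rw [div_le_div_iff₀ (by nlinarith) (by nlinarith)]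
  nlinarith [mul_nonneg (sub_nonneg.2 hxy) (by nlinarith : (0 : ℝ) ≤ x * y - 1)]

theorem exists_lt_mem_Icc_add_mul {a h s : ℝ} {N : ℕ} (hh : 0 < h) (hN : 0 < N)
    (hs : s ∈ Icc a (a + N * h)) : ∃ k < N, s ∈ Icc (a + k * h) (a + (k + 1) * h) := by
  obtain ⟨has, hsN⟩ := hs
  set m := ⌊(s - a) / h⌋₊
  have hm : m * h ≤ s - a := (le_div_iff₀ hh).1 (Nat.floor_le (div_nonneg (by linarith) hh.le))
  have hm₁ : s - a < (m + 1) * h := (div_lt_iff₀ hh).1 (Nat.lt_floor_add_one _)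
  rcases lt_or_ge m N with hmN | hmN
  · exact ⟨m, hmN, by linarith, by linarith⟩
  · refine ⟨N - 1, by omega, ?_, ?_⟩
    · have : ((N - 1 : ℕ) : ℝ) ≤ m := by exact_mod_cast (Nat.sub_le N 1).trans hmN
      nlinarith
    · rw [Nat.cast_sub hN, Nat.cast_one]
      linarith

section Enclosures

/- Everything here lives in an arbitrary field, so that the same expressions are evaluated
exactly in `ℚ` (by the kernel) and used as bounds in `ℝ`. -/
variable {K : Type*} [Field K]

def logTwoLower : K := 6931471803 / 10 ^ 10

def logTwoUpper : K := 6931471808 / 10 ^ 10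

def piLower : K := 3141592 / 10 ^ 6

def expTaylor (y : K) : K := 1 + y + y ^ 2 / 2 + y ^ 3 / 6 + y ^ 4 / 24 + y ^ 5 / 120

-- `7 / 4320 = (n + 1) / (n! * n)` is the remainder coefficient of `Real.exp_bound'` for `n = 6`
def expTaylorUpper (y : K) : K := expTaylor y + 7 * y ^ 6 / 4320

def twoRpowLower (a : K) : K := 2 * expTaylor ((a - 1) * logTwoLower)

def twoRpowUpper (b : K) : K := 2 * expTaylorUpper ((b - 1) * logTwoUpper)

def sinTaylor (w : K) : K := w - w ^ 3 / 6

def sinPiDivTwoMulUpper (a : K) : K := 1 - 2 * sinTaylor (piLower * (a - 1) / (4 * a)) ^ 2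

def phi1Deriv2Lower (a b : K) : K :=
  piLower ^ 2 / (4 * b ^ 3 * sinPiDivTwoMulUpper a ^ 2)
    - 4 * logTwoUpper * (twoRpowLower a / (twoRpowLower a ^ 2 - 1))
    + logTwoLower ^ 2 * (a - 1) * (twoRpowUpper b / (twoRpowUpper b - 1) ^ 2)
    + logTwoUpper ^ 2 * (a - 2) * (twoRpowLower a / (twoRpowLower a + 1) ^ 2)

end Enclosures

theorem logTwoLower_lt_log_two : (logTwoLower : ℝ) < log 2 := by
  have := log_two_gt_d9
  norm_num [logTwoLower] at this ⊢
  exact this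

theorem log_two_lt_logTwoUpper : log 2 < (logTwoUpper : ℝ) := by
  have := log_two_lt_d9
  norm_num [logTwoUpper] at this ⊢
  exact this

theorem piLower_lt_pi : (piLower : ℝ) < π := by
  have := pi_gt_d6
  norm_num [piLower] at this ⊢
  exact this

theorem expTaylor_le_exp {y : ℝ} (hy : 0 ≤ y) : expTaylor y ≤ exp y := by
  have := sum_le_exp_of_nonneg hy 6
  norm_num [Finset.sum_range_succ, Nat.factorial] at this
  simp only [expTaylor]
  linarith

theorem exp_le_expTaylorUpper {y : ℝ} (hy₀ : 0 ≤ y) (hy₁ : y ≤ 1) :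
    exp y ≤ expTaylorUpper y := by
  have := exp_bound' hy₀ hy₁ (n := 6) (by norm_num)
  norm_num [Finset.sum_range_succ, Nat.factorial] at this
  simp only [expTaylorUpper, expTaylor]
  linarith

theorem two_rpow_eq_two_mul_exp (s : ℝ) : (2 : ℝ) ^ s = 2 * exp ((s - 1) * log 2) := by
  rw [rpow_def_of_pos two_pos, ← exp_log (two_pos (α := ℝ)), ← exp_add, exp_log two_pos]
  ring_nf

theorem twoRpowLower_le_two_rpow {a s : ℝ} (ha : 1 ≤ a) (has : a ≤ s) :
    twoRpowLower a ≤ (2 : ℝ) ^ s := by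
  have hL := logTwoLower_lt_log_two
  have hL₀ : (0 : ℝ) ≤ logTwoLower := by norm_num [logTwoLower]
  rw [two_rpow_eq_two_mul_exp, twoRpowLower]
  gcongr
  calc expTaylor ((a - 1) * logTwoLower) ≤ exp ((a - 1) * logTwoLower) :=
        expTaylor_le_exp (mul_nonneg (by linarith) hL₀)
    _ ≤ exp ((s - 1) * log 2) := by gcongr; linarith

theorem two_rpow_le_twoRpowUpper {s b : ℝ} (hs : 1 ≤ s) (hsb : s ≤ b) (hb : b ≤ 2) :
    (2 : ℝ) ^ s ≤ twoRpowUpper b := by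
  have hL := log_two_lt_logTwoUpper
  have hL₀ : (0 : ℝ) ≤ logTwoUpper := by norm_num [logTwoUpper]
  have hL₁ : (logTwoUpper : ℝ) ≤ 1 := by norm_num [logTwoUpper]
  calc (2 : ℝ) ^ s ≤ 2 ^ b := rpow_le_rpow_of_exponent_le (by norm_num) hsb
    _ = 2 * exp ((b - 1) * log 2) := two_rpow_eq_two_mul_exp b
    _ ≤ 2 * exp ((b - 1) * logTwoUpper) := by gcongr; linarith
    _ ≤ twoRpowUpper b := by
        rw [twoRpowUpper]
        gcongr
        exact exp_le_expTaylorUpper (mul_nonneg (by linarith) hL₀) (by nlinarith)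

theorem sinTaylor_le_sinTaylor {v w : ℝ} (hv : 0 ≤ v) (hvw : v ≤ w) (hw : w ≤ 1) :
    sinTaylor v ≤ sinTaylor w := by
  simp only [sinTaylor]
  nlinarith [mul_nonneg (sub_nonneg.2 hvw) (by nlinarith : 0 ≤ 3 - (w ^ 2 + w * v + v ^ 2))]

theorem sin_pi_div_two_mul_le {a s : ℝ} (ha : 1 ≤ a) (has : a ≤ s) :
    sin (π / (2 * s)) ≤ sinPiDivTwoMulUpper a := by
  have hπ := piLower_lt_pi
  have hs : 0 < s := by linarith
  -- the half-angle `w ≤ π/4` is small enough for the cubic lower bound on `sin w` to be sharp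
  have hcos : sin (π / (2 * s)) = 1 - 2 * sin (π * (s - 1) / (4 * s)) ^ 2 := by
    rw [← cos_two_mul_eq_one_sub, ← cos_pi_div_two_sub]
    congr 1
    field_simp
    ring
  rw [hcos, sinPiDivTwoMulUpper]
  set w := π * (s - 1) / (4 * s)
  set w₀ := piLower * (a - 1) / (4 * a)
  have hw₀ : 0 ≤ w₀ := div_nonneg (mul_nonneg (by norm_num [piLower]) (by linarith)) (by linarith)
  have hw₀w : w₀ ≤ w := by
    rw [div_le_div_iff₀ (by positivity) (by positivity)]
    nlinarith [mul_le_mul_of_nonneg_right hπ.le (by nlinarith : 0 ≤ (a - 1) * s),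
      mul_le_mul_of_nonneg_left (by nlinarith : (a - 1) * s ≤ (s - 1) * a) pi_pos.le]
  have hw : w ≤ 1 := by
    rw [div_le_one (by positivity)]
    nlinarith [pi_lt_four]
  have hsin : sinTaylor w₀ ≤ sin w :=
    (sinTaylor_le_sinTaylor hw₀ hw₀w hw).trans (sin_ge_sub_cube (by linarith))
  have hsinTaylor : 0 ≤ sinTaylor w₀ := by
    have : w₀ ≤ 1 := hw₀w.trans hw
    simp only [sinTaylor]
    nlinarith [pow_le_one₀ hw₀ this (n := 2)]
  nlinarith [pow_le_pow_left₀ hsinTaylor hsin 2]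

noncomputable def phi1 (s : ℝ) : ℝ :=
  -(s - 1) * log ((2 : ℝ) ^ s - 1) + (s - 2) * log ((2 : ℝ) ^ s + 1)
    - s * log (2 * sin (π / (2 * s))) + log 6

noncomputable def phi1Deriv (s : ℝ) : ℝ :=
  -(log ((2 : ℝ) ^ s - 1) + (s - 1) * ((2 : ℝ) ^ s * log 2 / ((2 : ℝ) ^ s - 1)))
    + (log ((2 : ℝ) ^ s + 1) + (s - 2) * ((2 : ℝ) ^ s * log 2 / ((2 : ℝ) ^ s + 1)))
    - (log (2 * sin (π / (2 * s))) - π / (2 * s) * (cos (π / (2 * s)) / sin (π / (2 * s))))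

noncomputable def phi1Deriv2 (s : ℝ) : ℝ :=
  π ^ 2 / (4 * s ^ 3 * sin (π / (2 * s)) ^ 2)
    - 4 * log 2 * ((2 : ℝ) ^ s / (((2 : ℝ) ^ s) ^ 2 - 1))
    + log 2 ^ 2 * (s - 1) * ((2 : ℝ) ^ s / ((2 : ℝ) ^ s - 1) ^ 2)
    + log 2 ^ 2 * (s - 2) * ((2 : ℝ) ^ s / ((2 : ℝ) ^ s + 1) ^ 2)

theorem hasDerivAt_phi1 {s : ℝ} (hs : 1 < s) : HasDerivAt phi1 (phi1Deriv s) s := by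
  have hx := one_lt_rpow one_lt_two (by linarith : 0 < s)
  have hsin := sin_pi_div_two_mul_pos (by linarith : 1 / 2 < s)
  have hminus := hasDerivAt_sub_mul_log_rpow_add (k := 1) (c := -1) two_pos (by linarith)
  have hplus := hasDerivAt_sub_mul_log_rpow_add (k := 2) (c := 1) two_pos (by linarith)
  have htrig := hasDerivAt_mul_comp_div (c := π / 2) (s := s) (ψ' := fun u => cos u / sin u)
    (by linarith) (hasDerivAt_log_two_mul_sin (by rw [div_div]; exact hsin.ne'))
  simp only [← sub_eq_add_neg, div_div] at hminus htrig
  refine (((hminus.neg.add hplus).sub htrig).add_const (log 6)).congr_of_eventuallyEq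
    (Filter.Eventually.of_forall fun t => ?_)
  simp only [phi1, Pi.add_apply, Pi.sub_apply, Pi.neg_apply]
  ring

theorem hasDerivAt_phi1Deriv {s : ℝ} (hs : 1 < s) : HasDerivAt phi1Deriv (phi1Deriv2 s) s := by
  have hx := one_lt_rpow one_lt_two (by linarith : 0 < s)
  have hsin := sin_pi_div_two_mul_pos (by linarith : 1 / 2 < s)
  have hsin' : sin (π / 2 / s) ≠ 0 := by rw [div_div]; exact hsin.ne'
  have hminus := hasDerivAt_sub_mul_log_rpow_add_deriv (k := 1) (c := -1) two_pos (by linarith)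
  have hplus := hasDerivAt_sub_mul_log_rpow_add_deriv (k := 2) (c := 1) two_pos (by linarith)
  have htrig := hasDerivAt_mul_comp_div_deriv (c := π / 2) (s := s)
    (ψ' := fun u => cos u / sin u) (by linarith)
    (hasDerivAt_log_two_mul_sin hsin') (hasDerivAt_cos_div_sin hsin')
  simp only [← sub_eq_add_neg, div_div] at hminus htrig
  refine ((hminus.neg.add hplus).sub htrig).congr_deriv ?_ |>.congr_of_eventuallyEq
    (Filter.Eventually.of_forall fun t => ?_)
  · have h₁ : (2 : ℝ) ^ s - 1 ≠ 0 := by linarith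
    have h₂ : (2 : ℝ) ^ s + 1 ≠ 0 := by linarith
    have h₃ : ((2 : ℝ) ^ s) ^ 2 - 1 ≠ 0 := by nlinarith
    have h₄ := hsin.ne'
    simp only [phi1Deriv2]
    field_simp
    ring
  · simp only [phi1Deriv, Pi.add_apply, Pi.sub_apply, Pi.neg_apply]

theorem phi1Deriv2Lower_le {a b s : ℝ} (ha : 1 ≤ a) (hb : b ≤ 2) (hs : s ∈ Icc a b) :
    phi1Deriv2Lower a b ≤ phi1Deriv2 s := by
  obtain ⟨has, hsb⟩ := hs
  have hL₁ := logTwoLower_lt_log_two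
  have hL₂ := log_two_lt_logTwoUpper
  have hL₀ : (0 : ℝ) ≤ logTwoLower := by norm_num [logTwoLower]
  rw [phi1Deriv2Lower, phi1Deriv2]
  set x := (2 : ℝ) ^ s
  set xa := twoRpowLower a
  set xb := twoRpowUpper b
  have hxa : xa ≤ x := twoRpowLower_le_two_rpow ha has
  have hxb : x ≤ xb := two_rpow_le_twoRpowUpper (ha.trans has) hsb hb
  have hxa₁ : 1 < xa := by
    have : 0 ≤ (a - 1) * (logTwoLower : ℝ) := mul_nonneg (by linarith) hL₀
    simp only [xa, twoRpowLower, expTaylor]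
    nlinarith [pow_nonneg this 2, pow_nonneg this 3, pow_nonneg this 4, pow_nonneg this 5]
  have hx₁ : 1 < x := hxa₁.trans_le hxa
  have hA : piLower ^ 2 / (4 * b ^ 3 * sinPiDivTwoMulUpper a ^ 2)
      ≤ π ^ 2 / (4 * s ^ 3 * sin (π / (2 * s)) ^ 2) := by
    have hsin := sin_pi_div_two_mul_pos (by linarith : 1 / 2 < s)
    have hs₀ : 0 < s := by linarith
    refine div_le_div₀ (by positivity)
      (pow_le_pow_left₀ (by norm_num [piLower]) piLower_lt_pi.le 2) (by positivity) ?_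
    have hs₃ : s ^ 3 ≤ b ^ 3 := pow_le_pow_left₀ hs₀.le hsb 3
    have hsin₂ := pow_le_pow_left₀ hsin.le (sin_pi_div_two_mul_le ha has) 2
    have := mul_le_mul hs₃ hsin₂ (by positivity) (pow_nonneg (hs₀.trans_le hsb).le 3)
    linarith
  have hB : 4 * log 2 * (x / (x ^ 2 - 1)) ≤ 4 * logTwoUpper * (xa / (xa ^ 2 - 1)) :=
    mul_le_mul (by linarith) (antitoneOn_div_sq_sub_one hxa₁ hx₁ hxa)
      (div_nonneg (by linarith) (by nlinarith)) (by norm_num [logTwoUpper])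
  have hC : logTwoLower ^ 2 * (a - 1) * (xb / (xb - 1) ^ 2)
      ≤ log 2 ^ 2 * (s - 1) * (x / (x - 1) ^ 2) :=
    mul_le_mul (mul_le_mul (pow_le_pow_left₀ hL₀ hL₁.le 2) (by linarith)
        (by linarith) (by positivity))
      (antitoneOn_div_sub_one_sq hx₁ (hx₁.trans_le hxb) hxb)
      (div_nonneg (by linarith) (sq_nonneg _)) (mul_nonneg (by positivity) (by linarith))
  have hD : logTwoUpper ^ 2 * (a - 2) * (xa / (xa + 1) ^ 2)
      ≤ log 2 ^ 2 * (s - 2) * (x / (x + 1) ^ 2) := by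
    have hq : 0 ≤ x / (x + 1) ^ 2 := div_nonneg (by linarith) (sq_nonneg _)
    have hL : log 2 ^ 2 ≤ logTwoUpper ^ 2 :=
      pow_le_pow_left₀ (log_pos one_lt_two).le hL₂.le 2
    calc logTwoUpper ^ 2 * (a - 2) * (xa / (xa + 1) ^ 2)
        ≤ logTwoUpper ^ 2 * (a - 2) * (x / (x + 1) ^ 2) :=
          mul_le_mul_of_nonpos_left (antitoneOn_div_add_one_sq hxa₁.le hx₁.le hxa)
            (mul_nonpos_of_nonneg_of_nonpos (by positivity) (by linarith))
      _ ≤ log 2 ^ 2 * (a - 2) * (x / (x + 1) ^ 2) := by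
          rw [mul_assoc, mul_assoc]
          exact mul_le_mul_of_nonpos_right hL (mul_nonpos_of_nonpos_of_nonneg (by linarith) hq)
      _ ≤ log 2 ^ 2 * (s - 2) * (x / (x + 1) ^ 2) := by gcongr
  linarith

theorem Rat.cast_phi1Deriv2Lower (a b : ℚ) :
    ((phi1Deriv2Lower a b : ℚ) : ℝ) = phi1Deriv2Lower (a : ℝ) b := by
  simp only [phi1Deriv2Lower, sinPiDivTwoMulUpper, sinTaylor, twoRpowLower, twoRpowUpper,
    expTaylorUpper, expTaylor, logTwoLower, logTwoUpper, piLower]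
  push_cast
  rfl

theorem phi1Deriv2Lower_nonneg :
    ∀ k : ℕ, k < 192 → 0 ≤ phi1Deriv2Lower (4 / 3 + k / 288 : ℚ) (4 / 3 + (k + 1) / 288) := by
  decide +kernel

theorem phi1Deriv2_nonneg {s : ℝ} (hs : s ∈ Icc (4 / 3 : ℝ) 2) : 0 ≤ phi1Deriv2 s := by
  obtain ⟨k, hk, hsk⟩ := exists_lt_mem_Icc_add_mul (a := 4 / 3) (h := 1 / 288) (N := 192)
    (by norm_num) (by norm_num) (by norm_num; exact hs)
  have hcheck := (Rat.cast_nonneg (K := ℝ)).2 (phi1Deriv2Lower_nonneg k hk)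
  rw [Rat.cast_phi1Deriv2Lower] at hcheck
  push_cast at hcheck
  have hk' : (k : ℝ) + 1 ≤ 192 := by exact_mod_cast hk
  calc (0 : ℝ) ≤ phi1Deriv2Lower (4 / 3 + k / 288 : ℝ) (4 / 3 + ((k : ℝ) + 1) / 288) := hcheck
    _ ≤ phi1Deriv2 s := phi1Deriv2Lower_le (by linarith [k.cast_nonneg (α := ℝ)]) (by linarith)
        (by convert hsk using 2 <;> ring)

theorem convexOn_phi1 : ConvexOn ℝ (Icc (4 / 3) 2) phi1 := by
  have hgt : ∀ x ∈ interior (Icc (4 / 3 : ℝ) 2), 1 < x := fun x hx => by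
    rw [interior_Icc] at hx
    linarith [hx.1]
  refine convexOn_of_hasDerivWithinAt2_nonneg (convex_Icc _ _) ?_
    (fun x hx => (hasDerivAt_phi1 (hgt x hx)).hasDerivWithinAt)
    (fun x hx => (hasDerivAt_phi1Deriv (hgt x hx)).hasDerivWithinAt)
    (fun x hx => phi1Deriv2_nonneg (interior_subset hx))
  exact fun x hx => (hasDerivAt_phi1 (by linarith [hx.1])).continuousAt.continuousWithinAt

theorem phi1_two : phi1 2 = 0 := by
  have h6 : log 6 = log 2 + log 3 := by
    rw [show (6 : ℝ) = 2 * 3 by norm_num, log_mul two_ne_zero three_ne_zero]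
  rw [phi1, rpow_two, show π / (2 * 2) = π / 4 by ring, sin_pi_div_four,
    show 2 * (√2 / 2) = √2 by ring, log_sqrt zero_le_two, h6]
  norm_num
  ring

theorem phi1_four_thirds_nonpos : phi1 (4 / 3) ≤ 0 := by
  set y := (2 : ℝ) ^ (1 / 3 : ℝ)
  have hy₃ : y ^ 3 = 2 := by
    rw [← rpow_natCast, ← rpow_mul zero_le_two]
    norm_num
  have hy : 1.2599 ≤ y := by
    nlinarith [rpow_pos_of_pos two_pos (1 / 3 : ℝ), sq_nonneg (y - 1.2599), sq_nonneg (y + 1.2599)]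
  have h43 : (2 : ℝ) ^ (4 / 3 : ℝ) = 2 * y := by
    rw [show (4 / 3 : ℝ) = 1 + 1 / 3 by norm_num, rpow_add two_pos, rpow_one]
  have hsin : 2 * sin (π / (2 * (4 / 3))) = √(2 + √2) := by
    rw [show π / (2 * (4 / 3)) = π / 2 - π / 8 by ring, sin_pi_div_two_sub, cos_pi_div_eight]
    ring
  have hsqrt : (1.4142 : ℝ) ≤ √2 := by
    rw [le_sqrt (by norm_num) (by norm_num)]
    norm_num
  have hprod : (6 : ℝ) ^ 3 ≤ (2 * y - 1) * (2 * y + 1) ^ 2 * (2 + √2) ^ 2 := by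
    have hcubic : (2 * y - 1) * (2 * y + 1) ^ 2 = 15 + 4 * y ^ 2 - 2 * y := by
      linear_combination 8 * hy₃
    rw [hcubic]
    nlinarith [mul_nonneg (sub_nonneg.2 hy) (sub_nonneg.2 hsqrt), sq_nonneg (y - 1.2599),
      sq_sqrt (zero_le_two : (0 : ℝ) ≤ 2)]
  have hlog := log_le_log (by positivity) hprod
  rw [log_pow, log_mul (by nlinarith) (by positivity), log_mul (by nlinarith) (by positivity),
    log_pow, log_pow] at hlog
  rw [phi1, h43, hsin, log_sqrt (by positivity)]
  push_cast at hlog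
  nlinarith

theorem stmt_5 (s : ℝ) (hs : s ∈ Set.Icc (4/3 : ℝ) 2) :
    -(s - 1) * Real.log ((2 : ℝ) ^ s - 1) + (s - 2) * Real.log ((2 : ℝ) ^ s + 1)
      - s * Real.log (2 * Real.sin (Real.pi / (2 * s))) + Real.log 6 ≤ 0 := by
  have hseg : s ∈ segment ℝ (4 / 3 : ℝ) 2 := by
    rwa [segment_eq_Icc (by norm_num)]
  calc phi1 s ≤ max (phi1 (4 / 3)) (phi1 2) :=
        convexOn_phi1.le_on_segment (left_mem_Icc.2 (by norm_num)) (right_mem_Icc.2 (by norm_num))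
          hseg
    _ ≤ 0 := max_le phi1_four_thirds_nonpos phi1_two.le
end

section
/- For all t ∈ [4, 16], the expression −(2(t²+1)·log t + t(log 4 − t(4 + log 8)) + 4 − log 8) / (t² − 1) is nonnegative and decreasing in t. -/
/-!
The derivative of `logRatio` at `t` has the sign of
`2 log 2 (t³ - 6t² + t) + 8t² log t - 2t⁴ + 2`; bounding `log t` by its tangent line at `2`
turns this into a quartic polynomial that is negative for `t ≥ 4`, so `logRatio` decreases on `[4, ∞)`.
Nonnegativity on `[4, 16]` then reduces to `logRatio 16 = (1020 - 1317 log 2) / 255 ≥ 0`.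
-/

open Real Set

noncomputable def logRatio (t : ℝ) : ℝ :=
  -(2 * (t ^ 2 + 1) * log t + t * (log 4 - t * (4 + log 8)) + 4 - log 8) / (t ^ 2 - 1)

lemma log_four : log 4 = 2 * log 2 := by
  rw [show (4 : ℝ) = 2 ^ 2 by norm_num, log_pow]; norm_num

lemma log_eight : log 8 = 3 * log 2 := by
  rw [show (8 : ℝ) = 2 ^ 3 by norm_num, log_pow]; norm_num

lemma hasDerivAt_logRatio {t : ℝ} (ht : 0 < t) (ht1 : t ^ 2 - 1 ≠ 0) :
    HasDerivAt logRatio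
      ((2 * log 2 * (t ^ 3 - 6 * t ^ 2 + t) + 8 * t ^ 2 * log t - 2 * t ^ 4 + 2)
        / (t * (t ^ 2 - 1) ^ 2)) t := by
  have hnum := (((((hasDerivAt_pow 2 t).add_const 1).const_mul 2).mul (hasDerivAt_log ht.ne')).add
    ((hasDerivAt_id t).mul (((hasDerivAt_id t).mul_const (4 + log 8)).const_sub (log 4)))
    |>.add_const 4 |>.sub_const (log 8)).neg
  refine (hnum.div ((hasDerivAt_pow 2 t).sub_const 1) ht1).congr_deriv ?_
  simp only [Pi.neg_apply, Pi.add_apply, Pi.mul_apply, id, log_four, log_eight]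
  field_simp
  ring

lemma logRatio_deriv_numerator_nonpos {t : ℝ} (ht : 4 ≤ t) :
    2 * log 2 * (t ^ 3 - 6 * t ^ 2 + t) + 8 * t ^ 2 * log t - 2 * t ^ 4 + 2 ≤ 0 := by
  have hlog_t : log t ≤ t / 2 + log 2 - 1 := by
    have h := log_le_sub_one_of_pos (show (0 : ℝ) < t / 2 by linarith)
    rw [log_div (by linarith) two_ne_zero] at h
    linarith
  have hlog_two := log_two_lt_d9
  nlinarith [mul_nonneg (sq_nonneg t) (sub_nonneg.mpr ht),
    mul_nonneg (mul_nonneg (sq_nonneg t) (sub_nonneg.mpr ht)) (sub_nonneg.mpr ht)]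

lemma antitoneOn_logRatio : AntitoneOn logRatio (Ici 4) := by
  have hderiv : ∀ t ∈ Ici (4 : ℝ), HasDerivAt logRatio _ t := fun t (ht : 4 ≤ t) =>
    hasDerivAt_logRatio (by linarith) (by nlinarith)
  refine antitoneOn_of_hasDerivWithinAt_nonpos (convex_Ici 4)
    (fun t ht => (hderiv t ht).continuousAt.continuousWithinAt)
    (fun t ht => (hderiv t (interior_subset ht)).hasDerivWithinAt) fun t ht => ?_
  rw [interior_Ici, mem_Ioi] at ht
  have ht0 : 0 < t := by linarith
  exact div_nonpos_of_nonpos_of_nonneg (logRatio_deriv_numerator_nonpos ht.le) (by positivity)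

lemma logRatio_sixteen_nonneg : 0 ≤ logRatio 16 := by
  have hlog : log 16 = 4 * log 2 := by
    rw [show (16 : ℝ) = 2 ^ 4 by norm_num, log_pow]; norm_num
  rw [logRatio, hlog, log_four, log_eight]
  have := log_two_lt_d9
  apply div_nonneg <;> nlinarith

theorem stmt_9 :
    (∀ t ∈ Set.Icc (4 : ℝ) 16,
      0 ≤ -(2 * (t ^ 2 + 1) * Real.log t + t * (Real.log 4 - t * (4 + Real.log 8))
            + 4 - Real.log 8) / (t ^ 2 - 1)) ∧
    AntitoneOn (fun t : ℝ =>
      -(2 * (t ^ 2 + 1) * Real.log t + t * (Real.log 4 - t * (4 + Real.log 8))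
          + 4 - Real.log 8) / (t ^ 2 - 1)) (Set.Icc (4 : ℝ) 16) := by
  have hanti : AntitoneOn logRatio (Icc 4 16) := antitoneOn_logRatio.mono Icc_subset_Ici_self
  refine ⟨fun t ht => ?_, hanti⟩
  calc 0 ≤ logRatio 16 := logRatio_sixteen_nonneg
    _ ≤ logRatio t := hanti ht (right_mem_Icc.mpr (by norm_num)) ht.2
end

section
/- The function t ↦ π·csc(πt)·(−(π(2t−1)·cot(πt) + π·csc(πt) − 4)) is nonnegative and decreasing for t ∈ [1/4, 1/2]. -/
/-!
Substituting `w = π/2 - πt` turns the function into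
`secTan w = π sec w (4 + 2w tan w - π sec w)` on `w ∈ [0, π/4]`, and
`secTan' w = 2π (w (1 + sin² w) - sin w (π - 3 cos w)) / cos³ w`.
This is nonnegative as long as `cos w ≥ 1/2`, since then `sin w ≤ w` and
`π - 3 cos w ≤ 1 + sin² w` (a quadratic inequality in `cos w`, using `π < 3.25`).
So `secTan` increases, the original function decreases, and its minimum is
`secTan 0 = π (4 - π) > 0`.
-/

open Real Set

noncomputable def secTan (w : ℝ) : ℝ := π / cos w * (4 + 2 * w * tan w - π / cos w)

lemma hasDerivAt_secTan {w : ℝ} (hw : cos w ≠ 0) :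
    HasDerivAt secTan
      (2 * π * (3 * sin w * cos w + w * (1 + sin w ^ 2) - π * sin w) / cos w ^ 3) w := by
  have hsec := (hasDerivAt_const w π).div (hasDerivAt_cos w) hw
  have hinner :=
    ((((hasDerivAt_id' w).const_mul 2).mul (hasDerivAt_tan hw)).const_add 4).sub hsec
  refine (hsec.mul hinner).congr_deriv ?_
  simp only [Pi.sub_apply, Pi.div_apply, Pi.mul_apply, tan_eq_sin_div_cos]
  field_simp
  ring

lemma sin_mul_pi_sub_three_cos_le {w : ℝ} (hw₀ : 0 ≤ w) (hw : w ≤ π / 3) :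
    sin w * (π - 3 * cos w) ≤ w * (1 + sin w ^ 2) := by
  have hcos_half : 1 / 2 ≤ cos w := by
    rw [← cos_pi_div_three]
    exact cos_le_cos_of_nonneg_of_le_pi hw₀ (by linarith [pi_pos]) hw
  have hsin_nonneg : 0 ≤ sin w := sin_nonneg_of_nonneg_of_le_pi hw₀ (by linarith [pi_pos])
  have hfactor : π - 3 * cos w ≤ 1 + sin w ^ 2 := by
    nlinarith [sin_sq_add_cos_sq w, cos_le_one w, pi_lt_d2]
  calc sin w * (π - 3 * cos w) ≤ sin w * (1 + sin w ^ 2) := by gcongr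
    _ ≤ w * (1 + sin w ^ 2) := by gcongr; exact sin_le hw₀

lemma monotoneOn_secTan : MonotoneOn secTan (Icc 0 (π / 3)) := by
  have hcos_pos : ∀ w ∈ Icc 0 (π / 3), 0 < cos w := fun w hw =>
    cos_pos_of_mem_Ioo ⟨by linarith [hw.1, pi_pos], by linarith [hw.2, pi_pos]⟩
  refine monotoneOn_of_hasDerivWithinAt_nonneg (convex_Icc _ _)
    (fun w hw => (hasDerivAt_secTan (hcos_pos w hw).ne').continuousAt.continuousWithinAt)
    (fun w hw => (hasDerivAt_secTan (hcos_pos w (interior_subset hw)).ne').hasDerivWithinAt)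
    fun w hw => ?_
  rw [interior_Icc] at hw
  have hkey := sin_mul_pi_sub_three_cos_le hw.1.le hw.2.le
  have hnum : 0 ≤ 3 * sin w * cos w + w * (1 + sin w ^ 2) - π * sin w := by linarith
  exact div_nonneg (mul_nonneg (by positivity) hnum)
    (pow_nonneg (hcos_pos w (Ioo_subset_Icc_self hw)).le 3)

lemma secTan_zero : secTan 0 = π * (4 - π) := by
  simp [secTan]

lemma secTan_pi_div_two_sub (t : ℝ) :
    secTan (π / 2 - π * t) = π * (sin (π * t))⁻¹ *
        (-(π * (2 * t - 1) * (cos (π * t) / sin (π * t)) + π * (sin (π * t))⁻¹ - 4)) := by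
  rw [secTan, tan_eq_sin_div_cos, cos_pi_div_two_sub, sin_pi_div_two_sub]
  ring

theorem stmt_13 :
    (∀ t ∈ Set.Icc (1/4 : ℝ) (1/2),
      0 ≤ Real.pi * (Real.sin (Real.pi * t))⁻¹ *
        (-(Real.pi * (2 * t - 1) * (Real.cos (Real.pi * t) / Real.sin (Real.pi * t))
            + Real.pi * (Real.sin (Real.pi * t))⁻¹ - 4))) ∧
    AntitoneOn (fun t : ℝ => Real.pi * (Real.sin (Real.pi * t))⁻¹ *
        (-(Real.pi * (2 * t - 1) * (Real.cos (Real.pi * t) / Real.sin (Real.pi * t))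
            + Real.pi * (Real.sin (Real.pi * t))⁻¹ - 4)))
      (Set.Icc (1/4 : ℝ) (1/2)) := by
  simp_rw [← secTan_pi_div_two_sub]
  have hmaps : MapsTo (fun t => π / 2 - π * t) (Icc (1 / 4) (1 / 2)) (Icc 0 (π / 3)) :=
    fun t ht => ⟨by nlinarith [ht.2, pi_pos], by nlinarith [ht.1, pi_pos]⟩
  refine ⟨fun t ht => ?_, fun a ha b hb hab =>
    monotoneOn_secTan (hmaps hb) (hmaps ha) (by nlinarith [pi_pos])⟩
  calc (0 : ℝ) ≤ secTan 0 := by rw [secTan_zero]; nlinarith [pi_pos, pi_le_four]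
    _ ≤ secTan (π / 2 - π * t) :=
      monotoneOn_secTan ⟨le_rfl, by linarith [pi_pos]⟩ (hmaps ht) (hmaps ht).1
end

section
/- For all t ∈ [1/4, 1/2], the inequality −2πt + sin(2πt) − π·cos(πt) + π ≥ 0 holds. -/
theorem stmt_14 (t : ℝ) (ht : t ∈ Set.Icc (1/4 : ℝ) (1/2)) :
    0 ≤ -2 * Real.pi * t + Real.sin (2 * Real.pi * t) - Real.pi * Real.cos (Real.pi * t)
        + Real.pi := by
  obtain ⟨h1, h2⟩ := ht
  set x : ℝ := 1/2 - t with hx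
  have hx0 : 0 ≤ x := by simp [hx]; linarith
  have hx4 : x ≤ 1/4 := by simp [hx]; linarith
  have hpi := Real.pi_pos
  have hpi4 := Real.pi_lt_d2
  have hpi3 := Real.pi_gt_three
  have hs2 : Real.sin (2 * Real.pi * t) = Real.sin (2 * Real.pi * x) := by
    rw [show (2 * Real.pi * x) = Real.pi - 2 * Real.pi * t by rw [hx]; ring,
      Real.sin_pi_sub]
  have hc : Real.cos (Real.pi * t) = Real.sin (Real.pi * x) := by
    rw [show (Real.pi * t) = Real.pi / 2 - Real.pi * x by rw [hx]; ring,
      Real.cos_pi_div_two_sub]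
  have hA : Real.sin (Real.pi * x) ≤ Real.pi * x := Real.sin_le (by positivity)
  have hB : 2 / Real.pi * (2 * Real.pi * x) ≤ Real.sin (2 * Real.pi * x) :=
    Real.mul_le_sin (by positivity) (by nlinarith)
  have hB' : 4 * x ≤ Real.sin (2 * Real.pi * x) := by
    have : 2 / Real.pi * (2 * Real.pi * x) = 4 * x := by field_simp; ring
    linarith [hB, this ▸ hB]
  rw [hs2, hc]
  have ht' : -2 * Real.pi * t + Real.pi = 2 * Real.pi * x := by rw [hx]; ring
  nlinarith [mul_le_mul_of_nonneg_left hA hpi.le,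
    mul_nonneg hx0 (show (0:ℝ) ≤ 4 + 2 * Real.pi - Real.pi ^ 2 by nlinarith)]
end

section
/- For all s ∈ [2,4], s(π·csc(π/s) − 4) ≤ π(s−2)·cot(π/s); that is, the function s ↦ s·(π·csc(π/s) − 4) − π·(s − 2)·cot(π/s) is nonpositive on [2, 4]. -/
open Real

lemma key_ineq (u : ℝ) (h0 : 0 ≤ u) (h1 : u ≤ Real.pi / 4) :
    Real.pi ≤ 4 * Real.cos u + 2 * u * Real.sin u := by
  rcases eq_or_lt_of_le h0 with h | h
  · simp [← h]
    nlinarith [Real.pi_le_four]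
  · have hu1 : u ≤ 1 := by nlinarith [Real.pi_lt_d2]
    have hsin := Real.sin_gt_sub_cube h
    have hcos := Real.one_sub_sq_div_two_le_cos (x := u)
    have h4 : u ^ 4 ≤ 1 := pow_le_one₀ h0 hu1
    nlinarith [Real.pi_lt_d2, mul_lt_mul_of_pos_left hsin (by positivity : (0:ℝ) < 2 * u)]

theorem stmt_15 (s : ℝ) (hs : s ∈ Set.Icc (2 : ℝ) 4) :
    s * (Real.pi * (Real.sin (Real.pi / s))⁻¹ - 4) ≤
      Real.pi * (s - 2) * (Real.cos (Real.pi / s) / Real.sin (Real.pi / s)) := by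
  obtain ⟨hs2, hs4⟩ := hs
  have hsp : (0:ℝ) < s := by linarith
  have hπ := Real.pi_pos
  set x := Real.pi / s with hxdef
  have hx1 : x ≤ Real.pi / 2 := by
    rw [hxdef, div_le_div_iff₀ hsp (by norm_num)]; nlinarith
  have hx2 : Real.pi / 4 ≤ x := by
    rw [hxdef, div_le_div_iff₀ (by norm_num) hsp]; nlinarith
  have hxpos : 0 < x := by positivity
  have hsin : 0 < Real.sin x := Real.sin_pos_of_pos_of_lt_pi hxpos (by linarith)
  have hsx : s * x = Real.pi := by
    rw [hxdef]; field_simp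
  clear_value x
  have key : Real.pi - 4 * Real.sin x ≤ (Real.pi - 2 * x) * Real.cos x := by
    have h := key_ineq (Real.pi / 2 - x) (by linarith) (by linarith)
    rw [Real.cos_pi_div_two_sub, Real.sin_pi_div_two_sub] at h
    nlinarith
  have goal2 : s * Real.pi - 4 * s * Real.sin x ≤ Real.pi * (s - 2) * Real.cos x := by
    have h := mul_le_mul_of_nonneg_left key hsp.le
    have h2 : s * ((Real.pi - 2 * x) * Real.cos x) = Real.pi * (s - 2) * Real.cos x := by
      linear_combination (-2 * Real.cos x) * hsx
    nlinarith [h, h2]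
  have h3 : s * (Real.pi * (Real.sin x)⁻¹ - 4) = (s * Real.pi - 4 * s * Real.sin x) / Real.sin x := by
    field_simp
  have h4 : Real.pi * (s - 2) * (Real.cos x / Real.sin x) = (Real.pi * (s - 2) * Real.cos x) / Real.sin x := by
    ring
  rw [h3, h4]
  exact div_le_div_of_nonneg_right goal2 hsin.le
end

section
/- For all s ∈ [2, 5/2], the inequality −2(s−1)·log((2^s − 1)/(2^s − 2)) ≥ −log(9/4) + log(8·2^{1/3}/9)·(s − 2) holds. -/
/-!
The left-hand side `φ(s) = -2(s-1) log((2^s-1)/(2^s-2))` is convex on `[2, 5/2]`, and the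
right-hand side is its tangent line at `s = 2`. With `x = 2^s`, `φ''(s)` has the sign of
`2(x-1)(x-2) - log(x/2)(x^2-2)`, which stays positive for `x ∈ [4, 4√2]` after bounding
`log(x/2) ≤ log 2 + x/4 - 1`.
-/

open Real Set

theorem ConvexOn.add_mul_sub_le_of_hasDerivAt {S : Set ℝ} {f : ℝ → ℝ} {x y f' : ℝ}
    (hf : ConvexOn ℝ S f) (hx : x ∈ S) (hy : y ∈ S) (hxy : x ≤ y) (hd : HasDerivAt f f' x) :
    f x + f' * (y - x) ≤ f y := by
  rcases hxy.eq_or_lt with rfl | hlt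
  · simp
  have := hf.le_slope_of_hasDerivAt hx hy hlt hd
  rw [slope_def_field, le_div_iff₀ (sub_pos.2 hlt)] at this
  linarith

lemma log_div_two_mul_le {x : ℝ} (h4 : 4 ≤ x) (h32 : x ^ 2 ≤ 32) :
    log (x / 2) * (x ^ 2 - 2) ≤ 2 * (x - 1) * (x - 2) := by
  have hlog : log (x / 2) ≤ log 2 + (x / 4 - 1) := by
    rw [show x / 2 = 2 * (x / 4) by ring, log_mul two_ne_zero (by positivity)]
    gcongr
    exact log_le_sub_one_of_pos (by positivity)
  have hx : x ≤ 5.66 := by nlinarith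
  have h4x := sub_nonneg.2 h4
  have hx' := sub_nonneg.2 hx
  -- with `hlog` this is a cubic in `x`, convex on `[4, 5.66]` and negative at both ends
  nlinarith [log_two_lt_d9, mul_nonneg h4x hx', mul_nonneg (mul_nonneg h4x hx') h4x]

lemma two_lt_two_rpow {s : ℝ} (hs : 1 < s) : 2 < (2 : ℝ) ^ s := by
  simpa using rpow_lt_rpow_of_exponent_lt one_lt_two hs

lemma hasDerivAt_log_two_rpow_ratio {s : ℝ} (hs : 1 < s) :
    HasDerivAt (fun s ↦ log ((2 ^ s - 1) / (2 ^ s - 2)))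
      (-(log 2 * 2 ^ s / ((2 ^ s - 1) * (2 ^ s - 2)))) s := by
  have hx := two_lt_two_rpow hs
  have hpow : HasDerivAt (fun s : ℝ ↦ (2 : ℝ) ^ s) (2 ^ s * log 2) s :=
    (hasStrictDerivAt_const_rpow two_pos s).hasDerivAt
  have hne1 : (2 : ℝ) ^ s - 1 ≠ 0 := by linarith
  have hne2 : (2 : ℝ) ^ s - 2 ≠ 0 := by linarith
  refine (((hpow.sub_const 1).fun_div (hpow.sub_const 2) hne2).log
    (div_ne_zero hne1 hne2)).congr_deriv ?_
  field_simp
  ring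

noncomputable def phi (s : ℝ) : ℝ := -2 * (s - 1) * log ((2 ^ s - 1) / (2 ^ s - 2))

noncomputable def phiDeriv (s : ℝ) : ℝ :=
  -2 * log ((2 ^ s - 1) / (2 ^ s - 2)) + 2 * (s - 1) * log 2 * 2 ^ s / ((2 ^ s - 1) * (2 ^ s - 2))

noncomputable def phiDeriv2 (s : ℝ) : ℝ :=
  4 * log 2 * 2 ^ s / ((2 ^ s - 1) * (2 ^ s - 2))
    - 2 * (s - 1) * log 2 ^ 2 * 2 ^ s * ((2 ^ s) ^ 2 - 2) / ((2 ^ s - 1) * (2 ^ s - 2)) ^ 2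

lemma hasDerivAt_phi {s : ℝ} (hs : 1 < s) : HasDerivAt phi (phiDeriv s) s := by
  have hlin : HasDerivAt (fun s : ℝ ↦ -2 * (s - 1)) (-2) s := by
    simpa using ((hasDerivAt_id s).sub_const 1).const_mul (-2)
  refine (hlin.mul (hasDerivAt_log_two_rpow_ratio hs)).congr_deriv ?_
  rw [phiDeriv]
  ring

lemma hasDerivAt_phiDeriv {s : ℝ} (hs : 1 < s) : HasDerivAt phiDeriv (phiDeriv2 s) s := by
  have hx := two_lt_two_rpow hs
  have hne1 : (2 : ℝ) ^ s - 1 ≠ 0 := by linarith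
  have hne2 : (2 : ℝ) ^ s - 2 ≠ 0 := by linarith
  have hpow : HasDerivAt (fun s : ℝ ↦ (2 : ℝ) ^ s) (2 ^ s * log 2) s :=
    (hasStrictDerivAt_const_rpow two_pos s).hasDerivAt
  have hnum : HasDerivAt (fun s : ℝ ↦ 2 * (s - 1) * log 2 * 2 ^ s)
      (2 * log 2 * 2 ^ s + 2 * (s - 1) * log 2 * (2 ^ s * log 2)) s := by
    refine ((((hasDerivAt_id s).sub_const 1).const_mul 2).mul_const (log 2)).mul hpow
      |>.congr_deriv ?_
    simp
  have hden := (hpow.sub_const 1).fun_mul (hpow.sub_const 2)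
  refine (((hasDerivAt_log_two_rpow_ratio hs).const_mul (-2)).add
    (hnum.fun_div hden (mul_ne_zero hne1 hne2))).congr_deriv ?_
  rw [phiDeriv2]
  field_simp
  ring

lemma phiDeriv2_nonneg {s : ℝ} (h2 : 2 ≤ s) (h52 : s ≤ 5 / 2) : 0 ≤ phiDeriv2 s := by
  have h4 : (4 : ℝ) ≤ 2 ^ s :=
    calc (4 : ℝ) = 2 ^ (2 : ℝ) := by norm_num
      _ ≤ 2 ^ s := rpow_le_rpow_of_exponent_le one_le_two h2
  have h32 : ((2 : ℝ) ^ s) ^ 2 ≤ 32 :=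
    calc ((2 : ℝ) ^ s) ^ 2 = 2 ^ (s * 2) := (rpow_mul_natCast two_pos.le s 2).symm
      _ ≤ 2 ^ (5 : ℝ) := rpow_le_rpow_of_exponent_le one_le_two (by linarith)
      _ = 32 := by norm_num
  have hlog : log (2 ^ s / 2) = (s - 1) * log 2 := by
    rw [log_div (by positivity) two_ne_zero, log_rpow two_pos]
    ring
  have key := log_div_two_mul_le h4 h32
  rw [hlog] at key
  set x : ℝ := 2 ^ s
  have hform : phiDeriv2 s =
      2 * log 2 * x * (2 * (x - 1) * (x - 2) - (s - 1) * log 2 * (x ^ 2 - 2)) /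
        ((x - 1) * (x - 2)) ^ 2 := by
    rw [phiDeriv2]
    field_simp
    ring
  rw [hform]
  apply div_nonneg _ (sq_nonneg _)
  apply mul_nonneg (by positivity)
  linarith

lemma convexOn_phi : ConvexOn ℝ (Icc 2 (5 / 2)) phi := by
  have one_lt : ∀ s ∈ interior (Icc (2 : ℝ) (5 / 2)), 1 < s := fun s hs ↦ by
    rw [interior_Icc] at hs
    linarith [hs.1]
  refine convexOn_of_hasDerivWithinAt2_nonneg (convex_Icc _ _) ?_
    (fun s hs ↦ (hasDerivAt_phi (one_lt s hs)).hasDerivWithinAt)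
    (fun s hs ↦ (hasDerivAt_phiDeriv (one_lt s hs)).hasDerivWithinAt) ?_
  · exact fun s hs ↦ (hasDerivAt_phi (by linarith [hs.1])).continuousAt.continuousWithinAt
  · intro s hs
    rw [interior_Icc] at hs
    exact phiDeriv2_nonneg hs.1.le hs.2.le

lemma phi_two : phi 2 = -log (9 / 4) := by
  rw [phi, show (9 / 4 : ℝ) = (3 / 2) ^ 2 by norm_num, log_pow]
  norm_num

lemma phiDeriv_two : phiDeriv 2 = log (8 * 2 ^ ((1 : ℝ) / 3) / 9) := by
  have h : (2 : ℝ) ^ ((1 : ℝ) / 3) ≠ 0 := by positivity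
  conv_rhs => rw [log_div (by positivity) (by norm_num), log_mul (by norm_num) h,
    log_rpow two_pos, show (8 : ℝ) = 2 ^ 3 by norm_num, show (9 : ℝ) = 3 ^ 2 by norm_num,
    log_pow, log_pow]
  rw [phiDeriv]
  norm_num [log_div]
  ring

theorem stmt_16 (s : ℝ) (hs : s ∈ Set.Icc (2 : ℝ) (5/2)) :
    -Real.log (9/4) + Real.log (8 * (2 : ℝ) ^ ((1 : ℝ)/3) / 9) * (s - 2) ≤
      -2 * (s - 1) * Real.log (((2 : ℝ) ^ s - 1) / ((2 : ℝ) ^ s - 2)) := by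
  rw [← phi_two, ← phiDeriv_two]
  exact convexOn_phi.add_mul_sub_le_of_hasDerivAt (by norm_num) hs hs.1
    (hasDerivAt_phi one_lt_two)
end

section
/- For all t ∈ [5/2, 4], the inequality 25(t² − 1) + (2t³ − 25t² − 2t − 25)·log t ≤ 0 holds. -/
theorem stmt_18 (t : ℝ) (ht : t ∈ Set.Icc (5/2 : ℝ) 4) :
    25 * (t ^ 2 - 1) + (2 * t ^ 3 - 25 * t ^ 2 - 2 * t - 25) * Real.log t ≤ 0 := by
  obtain ⟨h1, h2⟩ := ht
  have ht0 : (0:ℝ) < t := by linarith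
  set w : ℝ := Real.sqrt (2 / t) with hw
  have hw0 : 0 < w := Real.sqrt_pos.mpr (by positivity)
  have hw2 : w ^ 2 = 2 / t := Real.sq_sqrt (by positivity)
  have htw : t * w ^ 2 = 2 := by
    rw [hw2]; field_simp
  -- log t = log 2 - 2 * log w is not needed; use log t ≥ log 2 + 2 - 2w
  have hlogw : Real.log w ≤ w - 1 := Real.log_le_sub_one_of_pos hw0
  have hlogt : Real.log 2 + 2 - 2 * w ≤ Real.log t := by
    have h2w : Real.log (2 / t) = 2 * Real.log w := by
      rw [hw, Real.log_sqrt (by positivity)]; ring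
    have hdiv : Real.log (2 / t) = Real.log 2 - Real.log t :=
      Real.log_div (by norm_num) (ne_of_gt ht0)
    nlinarith [hlogw, hdiv, h2w]
  have hC : 2 * t ^ 3 - 25 * t ^ 2 - 2 * t - 25 < 0 := by nlinarith
  have hlog2 : (0.6931471803 : ℝ) < Real.log 2 := by
    have := Real.log_two_gt_d9; linarith
  -- bound log t from below
  have hlb : (0.6931471803 : ℝ) + 2 - 2 * w ≤ Real.log t := by linarith
  have key : 25 * (t ^ 2 - 1) +
      (2 * t ^ 3 - 25 * t ^ 2 - 2 * t - 25) * ((0.6931471803 : ℝ) + 2 - 2 * w) ≤ 0 := by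
    have hwlo : (0.707 : ℝ) ≤ w := by nlinarith
    have hwhi : w ≤ (0.8945 : ℝ) := by nlinarith
    nlinarith [htw, hw0, mul_pos hw0 hw0, sq_nonneg (t - 5/2), sq_nonneg (t - 4),
      sq_nonneg (w - 0.8), mul_nonneg (sub_nonneg.mpr h1) (sub_nonneg.mpr hwlo),
      mul_nonneg (sub_nonneg.mpr h2) (sub_nonneg.mpr hwhi)]
  nlinarith [mul_le_mul_of_nonpos_left hlb (le_of_lt hC)]
end

section
/- The function g(t) = (t²(4 + log 8) − 2t²·log t + log(8/t²) − t·log 4 − 4)/(t − 1) is increasing on [5/2, 4], satisfies 0 ≤ g'(t) ≤ 1 there, and g(5/2) ≥ 25/2. -/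
/-!
On `t > 1`, `g t = (t - 1) log 2 + 4 (t + 1) - 2 (t² + 1) / (t - 1) · log (t / 2)`, so `g'` is a
rational function of `t` and `log (t / 2)`, and the coefficient of `log (t / 2)` in it,
`-2 (t² - 2t - 1) / (t - 1)²`, is negative on `[5/2, 4]`. Hence `g' ≥ 0` follows from the upper
bound `log (t / 2) ≤ t / 2 - 1` and `g' ≤ 1` from the lower bound
`log (t / 2) = log (3 / 2) + log (t / 3) ≥ log (3 / 2) + 1 - 3 / t`, with `log 2 ≈ 0.6931` and
`log (3 / 2) > 2 / 5`; in both cases what is left is a cubic inequality in `t`.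
-/

open Real Set

noncomputable def g (t : ℝ) : ℝ :=
  (t ^ 2 * (4 + log 8) - 2 * t ^ 2 * log t + log (8 / t ^ 2) - t * log 4 - 4) / (t - 1)

noncomputable def gDeriv (t : ℝ) : ℝ :=
  log 2 + 4 - 2 * (t ^ 2 + 1) / (t * (t - 1)) - 2 * (t ^ 2 - 2 * t - 1) / (t - 1) ^ 2 * log (t / 2)

lemma g_eq_of_one_lt {t : ℝ} (ht : 1 < t) :
    g t = log 2 * (t - 1) + 4 * (t + 1) - 2 * (t ^ 2 + 1) / (t - 1) * log (t / 2) := by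
  have ht0 : t ≠ 0 := by positivity
  have ht1 : t - 1 ≠ 0 := by linarith
  have h8 : log 8 = 3 * log 2 := by
    rw [show (8 : ℝ) = 2 ^ 3 by norm_num, log_pow]; norm_num
  have h4 : log 4 = 2 * log 2 := by
    rw [show (4 : ℝ) = 2 ^ 2 by norm_num, log_pow]; norm_num
  rw [g, log_div (by norm_num) (by positivity), log_div ht0 two_ne_zero, log_pow, h8, h4]
  field_simp
  ring

lemma hasDerivAt_g {t : ℝ} (ht : 1 < t) : HasDerivAt g (gDeriv t) t := by
  have ht0 : t ≠ 0 := by positivity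
  have ht1 : t - 1 ≠ 0 := by linarith
  have hfrac : HasDerivAt (fun x => (x ^ 2 + 1) / (x - 1))
      ((2 * t * (t - 1) - (t ^ 2 + 1)) / (t - 1) ^ 2) t := by
    refine (((hasDerivAt_pow 2 t).add_const 1).fun_div
      ((hasDerivAt_id' t).sub_const 1) ht1).congr_deriv ?_
    norm_num
  have hlog : HasDerivAt (fun x => log (x / 2)) ((1 / 2) / (t / 2)) t :=
    ((hasDerivAt_id t).div_const 2).log (by positivity)
  have hh := (((hasDerivAt_id t).sub_const 1).const_mul (log 2)).add
    (((hasDerivAt_id t).add_const 1).const_mul 4) |>.sub ((hfrac.const_mul 2).mul hlog)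
  have heq : g =ᶠ[nhds t] fun x =>
      log 2 * (x - 1) + 4 * (x + 1) - 2 * ((x ^ 2 + 1) / (x - 1)) * log (x / 2) := by
    filter_upwards [Ioi_mem_nhds ht] with x hx
    rw [g_eq_of_one_lt hx, mul_div_assoc]
  refine (hh.congr_of_eventuallyEq heq).congr_deriv ?_
  rw [gDeriv]
  field_simp
  ring

lemma gDeriv_mul_eq {t : ℝ} (ht : 1 < t) :
    gDeriv t * (t * (t - 1) ^ 2) = (log 2 + 4) * t * (t - 1) ^ 2 - 2 * (t ^ 2 + 1) * (t - 1)
      - 2 * t * (t ^ 2 - 2 * t - 1) * log (t / 2) := by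
  have ht0 : t ≠ 0 := by positivity
  have ht1 : t - 1 ≠ 0 := by linarith
  rw [gDeriv]
  field_simp

lemma two_fifths_lt_log_three_halves : 2 / 5 < log (3 / 2) := by
  have h98 := one_sub_inv_le_log_of_pos (show (0 : ℝ) < 9 / 8 by norm_num)
  rw [show (9 / 8 : ℝ) = (3 / 2) ^ 2 / 2 by norm_num, log_div (by norm_num) two_ne_zero,
    log_pow] at h98
  have := log_two_gt_d9
  norm_num at h98 this ⊢
  linarith

lemma gDeriv_nonneg {t : ℝ} (ht : t ∈ Icc (5 / 2 : ℝ) 4) : 0 ≤ gDeriv t := by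
  obtain ⟨ht₁, ht₂⟩ := ht
  have hpos : 0 < t * (t - 1) ^ 2 := mul_pos (by linarith) (pow_pos (by linarith) 2)
  have hlog := log_le_sub_one_of_pos (show 0 < t / 2 by positivity)
  have hL : 0.69 * (t * (t - 1) ^ 2) ≤ log 2 * (t * (t - 1) ^ 2) :=
    mul_le_mul_of_nonneg_right (by linarith [log_two_gt_d9]) hpos.le
  refine nonneg_of_mul_nonneg_left ?_ hpos
  rw [gDeriv_mul_eq (by linarith)]
  have hk : 0 ≤ 2 * t * (t ^ 2 - 2 * t - 1) := by nlinarith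
  nlinarith [mul_le_mul_of_nonneg_left hlog hk, mul_nonneg (sub_nonneg.2 ht₁) (sub_nonneg.2 ht₂)]

lemma gDeriv_le_one {t : ℝ} (ht : t ∈ Icc (5 / 2 : ℝ) 4) : gDeriv t ≤ 1 := by
  obtain ⟨ht₁, ht₂⟩ := ht
  have hpos : 0 < t * (t - 1) ^ 2 := mul_pos (by linarith) (pow_pos (by linarith) 2)
  have hlog : 2 / 5 + 1 - 3 / t ≤ log (t / 2) := by
    have := one_sub_inv_le_log_of_pos (show 0 < t / 3 by positivity)
    rw [show t / 2 = 3 / 2 * (t / 3) by ring, log_mul (by norm_num) (by positivity)]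
    rw [inv_div] at this
    linarith [two_fifths_lt_log_three_halves]
  have hL : log 2 * (t * (t - 1) ^ 2) ≤ 0.6932 * (t * (t - 1) ^ 2) :=
    mul_le_mul_of_nonneg_right (by linarith [log_two_lt_d9]) hpos.le
  refine le_of_mul_le_mul_right ?_ hpos
  rw [gDeriv_mul_eq (by linarith), one_mul]
  have htw : 2 / 5 * t + t - 3 ≤ t * log (t / 2) := by
    have := mul_le_mul_of_nonneg_left hlog (by linarith : (0 : ℝ) ≤ t)
    rw [mul_sub, mul_div_cancel₀ _ (by positivity : t ≠ 0), mul_add] at this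
    linarith
  have hk : 0 ≤ 2 * (t ^ 2 - 2 * t - 1) := by nlinarith
  have h₁ := sub_nonneg.2 ht₁
  nlinarith [mul_le_mul_of_nonneg_left htw hk, mul_nonneg h₁ (sub_nonneg.2 ht₂),
    mul_nonneg h₁ (sq_nonneg (t - 5 / 2)), mul_nonneg h₁ h₁]

lemma g_five_halves : 25 / 2 ≤ g (5 / 2) := by
  rw [g_eq_of_one_lt (by norm_num)]
  have h := log_le_sub_one_of_pos (show (0 : ℝ) < 5 / 2 / 2 by norm_num)
  have hL := log_two_gt_d9
  norm_num at h hL ⊢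
  linarith

theorem stmt_19 :
    MonotoneOn (fun t : ℝ =>
        (t ^ 2 * (4 + Real.log 8) - 2 * t ^ 2 * Real.log t + Real.log (8 / t ^ 2)
          - t * Real.log 4 - 4) / (t - 1)) (Set.Icc (5/2 : ℝ) 4) ∧
    (∀ t ∈ Set.Icc (5/2 : ℝ) 4,
      0 ≤ deriv (fun t : ℝ =>
        (t ^ 2 * (4 + Real.log 8) - 2 * t ^ 2 * Real.log t + Real.log (8 / t ^ 2)
          - t * Real.log 4 - 4) / (t - 1)) t ∧
      deriv (fun t : ℝ =>
        (t ^ 2 * (4 + Real.log 8) - 2 * t ^ 2 * Real.log t + Real.log (8 / t ^ 2)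
          - t * Real.log 4 - 4) / (t - 1)) t ≤ 1) ∧
    (25/2 : ℝ) ≤ ((5/2 : ℝ) ^ 2 * (4 + Real.log 8) - 2 * (5/2 : ℝ) ^ 2 * Real.log (5/2)
        + Real.log (8 / (5/2 : ℝ) ^ 2) - (5/2 : ℝ) * Real.log 4 - 4) / ((5/2 : ℝ) - 1) := by
  change MonotoneOn g _ ∧ (∀ t ∈ Icc (5 / 2 : ℝ) 4, 0 ≤ deriv g t ∧ deriv g t ≤ 1) ∧
    25 / 2 ≤ g (5 / 2)
  have hgt : ∀ {t : ℝ}, t ∈ Icc (5 / 2 : ℝ) 4 → 1 < t := fun ht => by linarith [ht.1]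
  refine ⟨?_, fun t ht => ?_, g_five_halves⟩
  · exact monotoneOn_of_hasDerivWithinAt_nonneg (convex_Icc _ _)
      (fun t ht => (hasDerivAt_g (hgt ht)).continuousAt.continuousWithinAt)
      (fun t ht => (hasDerivAt_g (hgt (interior_subset ht))).hasDerivWithinAt)
      (fun t ht => gDeriv_nonneg (interior_subset ht))
  · rw [(hasDerivAt_g (hgt ht)).deriv]
    exact ⟨gDeriv_nonneg ht, gDeriv_le_one ht⟩
end
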